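/- Let k be a commutative ring, A a commutative k-algebra, and a ∈ A ⊗_k A an element satisfying a · τ(a) = 1, where τ is the flip algebra automorphism of A ⊗_k A. Let M be an A-module, so that M ⊗_k M is a module over A ⊗_k A. Define R : M ⊗_k M → M ⊗_k M as the composite of the flip m ⊗ n ↦ n ⊗ m with the action of a. Then: (1) R ∘ R = id; (2) R satisfies the quantum Yang–Baxter relation R₁R₂R₁ = R₂R₁R₂ on M ⊗ M ⊗ M, where R₁ = R ⊗ id_M and R₂ = id_M ⊗ R; and (3) the image μ(a) of a under the multiplication map μ : A ⊗_k A → A satisfies μ(a)² = 1. -/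

import Mathlib

open TensorProduct

noncomputable section

variable (k : Type u) [CommRing k] (A : Type v) [CommRing A] [Algebra k A]
variable (M : Type w) [AddCommGroup M] [Module k M] [Module A M] [IsScalarTower k A M]

/-- The action of an element `z ∈ A ⊗[k] A` on `M ⊗[k] M`, where `x ⊗ y` acts by
`m ⊗ n ↦ (x • m) ⊗ (y • n)`. -/
def tensorSquareAction : A ⊗[k] A →ₗ[k] (M ⊗[k] M →ₗ[k] M ⊗[k] M) :=
  TensorProduct.homTensorHomMap (RingHom.id k) M M M M
    ∘ₗ TensorProduct.map (Algebra.lsmul k k M).toLinearMap (Algebra.lsmul k k M).toLinearMap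

/-- The map `R(A,a,M) : M ⊗[k] M → M ⊗[k] M`: the flip `m ⊗ n ↦ n ⊗ m` followed by the
action of `a ∈ A ⊗[k] A`. -/
def Rmat (a : A ⊗[k] A) : M ⊗[k] M →ₗ[k] M ⊗[k] M :=
  tensorSquareAction k A M a ∘ₗ (TensorProduct.comm k M M).toLinearMap

/-! Write `L(z)` for the action of `z ∈ A ⊗ A` on `M ⊗ M` and `P` for the flip, so `R(z) = L(z) P`.
Since `L` is an algebra map and `P L(w) = L(τ w) P`, we get `R(z) R(w) = L(z τ(w))`, which is the
identity for `z = w = a`. The braid relation is additive in each of the three copies of `a`, so it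
reduces to pure tensors `x ⊗ y`, `x' ⊗ y'`, `x'' ⊗ y''`, where both sides send `m ⊗ n ⊗ p` to
`x x' p ⊗ x'' y n ⊗ y' y'' m` because `A` is commutative. Finally `μ` is an algebra map with
`μ ∘ τ = μ`, so `μ(a)² = μ(a τ(a)) = 1`. -/

section

variable {R : Type*} [CommSemiring R] (M N P : Type*) [AddCommMonoid M] [AddCommMonoid N]
  [AddCommMonoid P] [Module R M] [Module R N] [Module R P]

def lTensorAssoc : Module.End R (N ⊗[R] P) →ₗ[R] Module.End R ((M ⊗[R] N) ⊗[R] P) :=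
  (TensorProduct.assoc R M N P).symm.conj ∘ₗ LinearMap.lTensorHom M

theorem lTensorAssoc_apply (f : Module.End R (N ⊗[R] P)) :
    lTensorAssoc M N P f = (TensorProduct.assoc R M N P).symm.toLinearMap ∘ₗ f.lTensor M
      ∘ₗ (TensorProduct.assoc R M N P).toLinearMap := rfl

end

theorem LinearMap.mul'_sq_eq_one {R S : Type*} [CommSemiring R] [CommSemiring S] [Algebra R S]
    {z : S ⊗[R] S} (hz : z * Algebra.TensorProduct.comm R S S z = 1) :
    LinearMap.mul' R S z ^ 2 = 1 :=
  calc LinearMap.mul' R S z ^ 2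
      = LinearMap.mul' R S z * LinearMap.mul' R S (Algebra.TensorProduct.comm R S S z) := by
        rw [sq]; exact congrArg _ (LinearMap.mul'_comm z).symm
    _ = Algebra.TensorProduct.lmul' R (z * Algebra.TensorProduct.comm R S S z) :=
        (map_mul (Algebra.TensorProduct.lmul' R) _ _).symm
    _ = 1 := by rw [hz, map_one]

section

variable {k A M}

def tensorSquareActionAlgHom : A ⊗[k] A →ₐ[k] Module.End k (M ⊗[k] M) :=
  Module.endTensorEndAlgHom.comp
    (Algebra.TensorProduct.map (Algebra.lsmul k k M) (Algebra.lsmul k k M))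

theorem tensorSquareAction_tmul (x y : A) :
    tensorSquareAction k A M (x ⊗ₜ y) = map (Algebra.lsmul k k M x) (Algebra.lsmul k k M y) := by
  simp [tensorSquareAction]

theorem tensorSquareAction_eq_algHom (z : A ⊗[k] A) :
    tensorSquareAction k A M z = tensorSquareActionAlgHom z := by
  induction z using TensorProduct.induction_on with
  | zero => simp
  | tmul x y =>
    ext
    simp [tensorSquareAction_tmul, tensorSquareActionAlgHom, Module.endTensorEndAlgHom_apply]
  | add z w hz hw => rw [map_add, map_add, hz, hw]

theorem tensorSquareAction_mul (z w : A ⊗[k] A) :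
    tensorSquareAction k A M (z * w)
      = tensorSquareAction k A M z ∘ₗ tensorSquareAction k A M w := by
  simp only [tensorSquareAction_eq_algHom, map_mul, Module.End.mul_eq_comp]

theorem tensorSquareAction_one : tensorSquareAction k A M 1 = LinearMap.id := by
  rw [tensorSquareAction_eq_algHom, map_one, Module.End.one_eq_id]

theorem comm_comp_tensorSquareAction (z : A ⊗[k] A) :
    (TensorProduct.comm k M M).toLinearMap ∘ₗ tensorSquareAction k A M z
      = tensorSquareAction k A M (Algebra.TensorProduct.comm k A A z)
          ∘ₗ (TensorProduct.comm k M M).toLinearMap := by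
  induction z using TensorProduct.induction_on with
  | zero => simp
  | tmul x y => ext; simp [tensorSquareAction_tmul]
  | add z w hz hw => simp only [map_add, LinearMap.comp_add, LinearMap.add_comp, hz, hw]

theorem Rmat_comp_Rmat (z w : A ⊗[k] A) :
    Rmat k A M z ∘ₗ Rmat k A M w
      = tensorSquareAction k A M (z * Algebra.TensorProduct.comm k A A w) := by
  rw [Rmat, Rmat, LinearMap.comp_assoc, ← LinearMap.comp_assoc _ (tensorSquareAction k A M w),
    comm_comp_tensorSquareAction, LinearMap.comp_assoc, ← LinearEquiv.coe_trans,
    TensorProduct.comm_trans_comm, LinearEquiv.refl_toLinearMap, LinearMap.comp_id,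
    tensorSquareAction_mul]

theorem Rmat_tmul (x y : A) (m n : M) :
    Rmat k A M (x ⊗ₜ y) (m ⊗ₜ n) = (x • n) ⊗ₜ (y • m) := by
  simp [Rmat, tensorSquareAction_tmul]

theorem Rmat_zero : Rmat k A M 0 = 0 := by
  simp [Rmat]

theorem Rmat_add (z w : A ⊗[k] A) : Rmat k A M (z + w) = Rmat k A M z + Rmat k A M w := by
  simp [Rmat, LinearMap.add_comp]

theorem Rmat_yangBaxter_tmul (x y x' y' x'' y'' : A) :
    (Rmat k A M (x ⊗ₜ y)).rTensor M ∘ₗ lTensorAssoc M M M (Rmat k A M (x' ⊗ₜ y'))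
        ∘ₗ (Rmat k A M (x'' ⊗ₜ y'')).rTensor M
      = lTensorAssoc M M M (Rmat k A M (x'' ⊗ₜ y'')) ∘ₗ (Rmat k A M (x' ⊗ₜ y')).rTensor M
        ∘ₗ lTensorAssoc M M M (Rmat k A M (x ⊗ₜ y)) := by
  ext m n p
  simp [lTensorAssoc_apply, Rmat_tmul, smul_smul, mul_comm]

theorem Rmat_yangBaxter (z w v : A ⊗[k] A) :
    (Rmat k A M z).rTensor M ∘ₗ lTensorAssoc M M M (Rmat k A M w) ∘ₗ (Rmat k A M v).rTensor M
      = lTensorAssoc M M M (Rmat k A M v) ∘ₗ (Rmat k A M w).rTensor M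
        ∘ₗ lTensorAssoc M M M (Rmat k A M z) := by
  induction z using TensorProduct.induction_on with
  | zero => simp [Rmat_zero]
  | add z₁ z₂ h₁ h₂ =>
    simp only [Rmat_add, map_add, LinearMap.rTensor_add, LinearMap.add_comp, LinearMap.comp_add,
      h₁, h₂]
  | tmul x y =>
  induction w using TensorProduct.induction_on with
  | zero => simp [Rmat_zero]
  | add w₁ w₂ h₁ h₂ =>
    simp only [Rmat_add, map_add, LinearMap.rTensor_add, LinearMap.add_comp, LinearMap.comp_add,
      h₁, h₂]
  | tmul x' y' =>
  induction v using TensorProduct.induction_on with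
  | zero => simp [Rmat_zero]
  | add v₁ v₂ h₁ h₂ =>
    simp only [Rmat_add, map_add, LinearMap.rTensor_add, LinearMap.add_comp, LinearMap.comp_add,
      h₁, h₂]
  | tmul x'' y'' => exact Rmat_yangBaxter_tmul x y x' y' x'' y''

end

/-- for a commutative `k`-algebra `A`, an element `a ∈ A ⊗ A` with `a·τ(a) = 1`,
and an `A`-module `M`, the map `R = L(a) ∘ flip` on `M ⊗ M` satisfies `R² = id` and the quantum
Yang-Baxter relation, and `μ(a)² = 1`. -/
theorem unitary_R_matrix_from_commutative_algebra
    (a : A ⊗[k] A) (ha : a * (Algebra.TensorProduct.comm k A A) a = 1) :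
    (Rmat k A M a ∘ₗ Rmat k A M a = LinearMap.id) ∧
    ((Rmat k A M a).rTensor M
        ∘ₗ ((TensorProduct.assoc k M M M).symm.toLinearMap
              ∘ₗ (Rmat k A M a).lTensor M ∘ₗ (TensorProduct.assoc k M M M).toLinearMap)
        ∘ₗ (Rmat k A M a).rTensor M
      = ((TensorProduct.assoc k M M M).symm.toLinearMap
              ∘ₗ (Rmat k A M a).lTensor M ∘ₗ (TensorProduct.assoc k M M M).toLinearMap)
        ∘ₗ (Rmat k A M a).rTensor M
        ∘ₗ ((TensorProduct.assoc k M M M).symm.toLinearMap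
              ∘ₗ (Rmat k A M a).lTensor M ∘ₗ (TensorProduct.assoc k M M M).toLinearMap)) ∧
    (LinearMap.mul' k A a) ^ 2 = 1 := by
  refine ⟨?_, Rmat_yangBaxter a a a, LinearMap.mul'_sq_eq_one ha⟩
  rw [Rmat_comp_Rmat, ha, tensorSquareAction_one]

end
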